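/- Let H_n(t) = ∫₀ᵗ dt₁ ⋯ ∫_{t_{n−1}}ᵗ dt_n ∏_{k=1}^{n+1} cos(c(t_k−t_{k−1})) with t₀=0, t_{n+1}=t, H₀(t)=cos(ct), and let E(t) = e^{−λt} ∑_{n=0}^∞ λⁿ H_n(t). Then E satisfies E'' = −λE' − c²E with E(0)=1, E'(0)=0, and hence E(t) = e^{−λt/2}[cosh((t/2)√(λ²−4c²)) + (λ/√(λ²−4c²)) sinh((t/2)√(λ²−4c²))] if 0<2c<λ; E(t) = e^{−λt/2}(1 + λt/2) if λ = 2c > 0; and E(t) = e^{−λt/2}[cos((t/2)√(4c²−λ²)) + (λ/√(4c²−λ²)) sin((t/2)√(4c²−λ²))] if 2c > λ > 0. -/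

import Mathlib

open Real MeasureTheory

/-- Iterated simplex integral with `s₀ = a`, `s_{n+1} = t`. -/
noncomputable def iterInt (f : ℝ → ℝ) : ℕ → ℝ → ℝ → ℝ
  | 0, a, t => f (t - a)
  | n+1, a, t => ∫ s in a..t, f (s - a) * iterInt f n s t

/-- `H_n(t)`: simplex integral of products of cosines of increments,
`H_0(t) = cos(ct)`; it arises from the random motion on the unit sphere. -/
noncomputable def H (c : ℝ) (n : ℕ) (t : ℝ) : ℝ :=
  iterInt (fun u => Real.cos (c * u)) n 0 t

/-!
The terms `H_{n+1} = K H_n` are the iterates of the Volterra operator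
`K u (t) = ∫₀ᵗ cos (c (t - s)) u s ds`, and `|Kⁿ u t| ≤ M |t|ⁿ / n!`, so `∑ λⁿ H_n` is the
(convergent) Neumann series of `G = cos (c ·) + λ K G`, and it equals any continuous solution `G`.
If `F'' = -λ F' - c² F`, `F 0 = 1`, `F' 0 = 0`, then `G = e^{λt} F` is such a solution: since
`(K u)' = u - c S u` and `(S u)' = c K u` for the sine kernel `S`, the defect
`cos (c ·) + λ K G - G` solves `D'' = -c² D` with zero initial data, so it vanishes by conservation
of `D'² + c² D²`. Hence `E = F`, and `F` is explicit in each of the three damping regimes.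
-/

open Set Filter Topology
open scoped Nat

noncomputable def cosConv (c : ℝ) (u : ℝ → ℝ) (t : ℝ) : ℝ :=
  ∫ s in (0 : ℝ)..t, cos (c * (t - s)) * u s

noncomputable def sinConv (c : ℝ) (u : ℝ → ℝ) (t : ℝ) : ℝ :=
  ∫ s in (0 : ℝ)..t, sin (c * (t - s)) * u s

section Convolution

variable {c : ℝ} {u : ℝ → ℝ}

lemma cosConv_eq (hu : Continuous u) (t : ℝ) :
    cosConv c u t = cos (c * t) * (∫ s in (0 : ℝ)..t, cos (c * s) * u s)
      + sin (c * t) * ∫ s in (0 : ℝ)..t, sin (c * s) * u s := by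
  simp_rw [cosConv, mul_sub, cos_sub, add_mul, mul_assoc]
  rw [intervalIntegral.integral_add (Continuous.intervalIntegrable (by fun_prop) _ _)
    (Continuous.intervalIntegrable (by fun_prop) _ _),
    intervalIntegral.integral_const_mul, intervalIntegral.integral_const_mul]

lemma sinConv_eq (hu : Continuous u) (t : ℝ) :
    sinConv c u t = sin (c * t) * (∫ s in (0 : ℝ)..t, cos (c * s) * u s)
      - cos (c * t) * ∫ s in (0 : ℝ)..t, sin (c * s) * u s := by
  simp_rw [sinConv, mul_sub, sin_sub, sub_mul, mul_assoc]
  rw [intervalIntegral.integral_sub (Continuous.intervalIntegrable (by fun_prop) _ _)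
    (Continuous.intervalIntegrable (by fun_prop) _ _),
    intervalIntegral.integral_const_mul, intervalIntegral.integral_const_mul]

lemma hasDerivAt_cosConv (hu : Continuous u) (t : ℝ) :
    HasDerivAt (cosConv c u) (u t - c * sinConv c u t) t := by
  have hcos := ((hasDerivAt_id t).const_mul c).cos
  have hsin := ((hasDerivAt_id t).const_mul c).sin
  have hA : HasDerivAt (fun t => ∫ s in (0 : ℝ)..t, cos (c * s) * u s) (cos (c * t) * u t) t :=
    (Continuous.integral_hasStrictDerivAt (by fun_prop) 0 t).hasDerivAt
  have hB : HasDerivAt (fun t => ∫ s in (0 : ℝ)..t, sin (c * s) * u s) (sin (c * t) * u t) t :=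
    (Continuous.integral_hasStrictDerivAt (by fun_prop) 0 t).hasDerivAt
  rw [funext (cosConv_eq hu), sinConv_eq hu]
  refine ((hcos.mul hA).add (hsin.mul hB)).congr_deriv ?_
  simp only [id]
  linear_combination (u t) * cos_sq_add_sin_sq (c * t)

lemma hasDerivAt_sinConv (hu : Continuous u) (t : ℝ) :
    HasDerivAt (sinConv c u) (c * cosConv c u t) t := by
  have hcos := ((hasDerivAt_id t).const_mul c).cos
  have hsin := ((hasDerivAt_id t).const_mul c).sin
  have hA : HasDerivAt (fun t => ∫ s in (0 : ℝ)..t, cos (c * s) * u s) (cos (c * t) * u t) t :=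
    (Continuous.integral_hasStrictDerivAt (by fun_prop) 0 t).hasDerivAt
  have hB : HasDerivAt (fun t => ∫ s in (0 : ℝ)..t, sin (c * s) * u s) (sin (c * t) * u t) t :=
    (Continuous.integral_hasStrictDerivAt (by fun_prop) 0 t).hasDerivAt
  rw [funext (sinConv_eq hu), cosConv_eq hu]
  refine ((hsin.mul hA).sub (hcos.mul hB)).congr_deriv ?_
  simp only [id]
  ring

lemma continuous_cosConv (hu : Continuous u) : Continuous (cosConv c u) :=
  continuous_iff_continuousAt.2 fun t => (hasDerivAt_cosConv hu t).continuousAt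

lemma continuous_iterate_cosConv (hu : Continuous u) (n : ℕ) : Continuous ((cosConv c)^[n] u) :=
  Function.Iterate.rec (fun v => Continuous v) hu (fun _ => continuous_cosConv) n

lemma cosConv_add_mul {v : ℝ → ℝ} (hu : Continuous u) (hv : Continuous v) (a : ℝ) :
    cosConv c (fun x => u x + a * v x) = fun t => cosConv c u t + a * cosConv c v t := by
  funext t
  simp_rw [cosConv, mul_add, mul_left_comm _ a]
  rw [intervalIntegral.integral_add (Continuous.intervalIntegrable (by fun_prop) _ _)
    (Continuous.intervalIntegrable (by fun_prop) _ _), intervalIntegral.integral_const_mul]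

lemma iterate_cosConv_add_mul {v : ℝ → ℝ} (hu : Continuous u) (hv : Continuous v) (a : ℝ)
    (n : ℕ) : (cosConv c)^[n] (fun x => u x + a * v x)
      = fun t => (cosConv c)^[n] u t + a * (cosConv c)^[n] v t := by
  induction n with
  | zero => rfl
  | succ n ih =>
    simp only [Function.iterate_succ_apply']
    rw [ih, cosConv_add_mul (continuous_iterate_cosConv hu n) (continuous_iterate_cosConv hv n)]

end Convolution

lemma abs_intervalIntegral_le_pow_div_factorial {f : ℝ → ℝ} {M s : ℝ} {n : ℕ}
    (hf : ∀ x ∈ uIcc 0 s, |f x| ≤ M * |x| ^ n / n !) :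
    |∫ x in (0 : ℝ)..s, f x| ≤ M * |s| ^ (n + 1) / (n + 1)! := by
  wlog hs : 0 ≤ s generalizing f s
  · have hneg : ∀ x ∈ uIcc 0 (-s), |f (-x)| ≤ M * |x| ^ n / n ! := fun x hx => by
      rw [uIcc_of_le (by linarith), mem_Icc] at hx
      rw [← abs_neg x]
      exact hf (-x) (by rw [uIcc_of_ge (by linarith), mem_Icc]; constructor <;> linarith)
    have key := this hneg (by linarith)
    rwa [intervalIntegral.integral_comp_neg, neg_zero, neg_neg, intervalIntegral.integral_symm,
      abs_neg, abs_neg] at key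
  have hbound : ∀ x ∈ Ioc 0 s, ‖f x‖ ≤ M * x ^ n / n ! := fun x hx => by
    simpa only [Real.norm_eq_abs, abs_of_pos hx.1] using
      hf x (uIcc_of_le hs ▸ Ioc_subset_Icc_self hx)
  have hpow : ∫ x in (0 : ℝ)..s, M * x ^ n / n ! = M * s ^ (n + 1) / (n + 1)! := by
    simp only [intervalIntegral.integral_div, intervalIntegral.integral_const_mul, integral_pow,
      Nat.factorial_succ, Nat.cast_mul]
    field_simp
    push_cast
    ring
  calc |∫ x in (0 : ℝ)..s, f x| ≤ ∫ x in (0 : ℝ)..s, M * x ^ n / n ! :=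
        intervalIntegral.norm_integral_le_of_norm_le hs (ae_of_all _ hbound)
          (Continuous.intervalIntegrable (by fun_prop) _ _)
    _ = M * |s| ^ (n + 1) / (n + 1)! := by rw [hpow, abs_of_nonneg hs]

section Neumann

variable {c : ℝ}

lemma abs_cosConv_le {u : ℝ → ℝ} {M t : ℝ} {n : ℕ}
    (hu : ∀ s ∈ uIcc 0 t, |u s| ≤ M * |s| ^ n / n !) :
    ∀ s ∈ uIcc 0 t, |cosConv c u s| ≤ M * |s| ^ (n + 1) / (n + 1)! := by
  intro s hs
  refine abs_intervalIntegral_le_pow_div_factorial fun x hx => ?_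
  calc |cos (c * (s - x)) * u x| = |cos (c * (s - x))| * |u x| := abs_mul _ _
    _ ≤ 1 * |u x| := by gcongr; exact abs_cos_le_one _
    _ ≤ M * |x| ^ n / n ! := by
      rw [one_mul]
      exact hu x (uIcc_subset_uIcc left_mem_uIcc hs hx)

lemma abs_iterate_cosConv_le {u : ℝ → ℝ} {M t : ℝ} (hu : ∀ s ∈ uIcc 0 t, |u s| ≤ M) (n : ℕ) :
    ∀ s ∈ uIcc 0 t, |(cosConv c)^[n] u s| ≤ M * |s| ^ n / n ! := by
  induction n with
  | zero => simpa using hu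
  | succ n ih =>
    simp only [Function.iterate_succ_apply']
    exact abs_cosConv_le ih

lemma norm_pow_mul_iterate_cosConv_le {u : ℝ → ℝ} {M t : ℝ} (hu : ∀ s ∈ uIcc 0 t, |u s| ≤ M)
    (lam : ℝ) (n : ℕ) :
    ‖lam ^ n * (cosConv c)^[n] u t‖ ≤ M * ((|lam| * |t|) ^ n / n !) := by
  rw [Real.norm_eq_abs, abs_mul, abs_pow, mul_pow]
  calc |lam| ^ n * |(cosConv c)^[n] u t| ≤ |lam| ^ n * (M * |t| ^ n / n !) := by
        gcongr; exact abs_iterate_cosConv_le hu n t right_mem_uIcc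
    _ = M * (|lam| ^ n * |t| ^ n / n !) := by ring

theorem hasSum_iterate_cosConv {lam : ℝ} {f G : ℝ → ℝ} (hf : Continuous f) (hG : Continuous G)
    (hvolterra : ∀ t, G t = f t + lam * cosConv c G t) (t : ℝ) :
    HasSum (fun n => lam ^ n * (cosConv c)^[n] f t) (G t) := by
  have hstep (N : ℕ) : (cosConv c)^[N] G
      = fun x => (cosConv c)^[N] f x + lam * (cosConv c)^[N + 1] G x := by
    calc (cosConv c)^[N] G = (cosConv c)^[N] (fun x => f x + lam * cosConv c G x) :=
          congrArg _ (funext hvolterra)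
      _ = _ := by
        rw [iterate_cosConv_add_mul hf (continuous_cosConv hG), Function.iterate_succ_apply]
  have hremainder (N : ℕ) : G t = ∑ n ∈ Finset.range N, lam ^ n * (cosConv c)^[n] f t
      + lam ^ N * (cosConv c)^[N] G t := by
    induction N with
    | zero => simp
    | succ N ih => rw [ih, hstep, Finset.sum_range_succ]; ring
  obtain ⟨Mf, hMf⟩ := (isCompact_uIcc (a := 0) (b := t)).exists_bound_of_continuousOn
    hf.continuousOn
  obtain ⟨MG, hMG⟩ := (isCompact_uIcc (a := 0) (b := t)).exists_bound_of_continuousOn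
    hG.continuousOn
  have hsummable : Summable fun n => ‖lam ^ n * (cosConv c)^[n] f t‖ :=
    .of_nonneg_of_le (fun _ => norm_nonneg _) (norm_pow_mul_iterate_cosConv_le hMf lam)
      ((Real.summable_pow_div_factorial _).mul_left Mf)
  have hvanish : Tendsto (fun N => lam ^ N * (cosConv c)^[N] G t) atTop (𝓝 0) := by
    refine squeeze_zero_norm (norm_pow_mul_iterate_cosConv_le hMG lam) ?_
    simpa using (FloorSemiring.tendsto_pow_div_factorial_atTop (|lam| * |t|)).const_mul MG
  rw [hasSum_iff_tendsto_nat_of_summable_norm hsummable]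
  have hpartial := (tendsto_const_nhds (x := G t)).sub hvanish
  rw [sub_zero] at hpartial
  exact hpartial.congr fun N => by rw [hremainder N]; ring

end Neumann

structure IsIVPSolution (a b y₀ y₁ : ℝ) (y y' : ℝ → ℝ) : Prop where
  hasDerivAt : ∀ t, HasDerivAt y (y' t) t
  hasDerivAt_deriv : ∀ t, HasDerivAt y' (a * y' t + b * y t) t
  initial_value : y 0 = y₀
  initial_deriv : y' 0 = y₁

namespace IsIVPSolution

variable {a b y₀ y₁ : ℝ} {y y' : ℝ → ℝ}

lemma continuous (h : IsIVPSolution a b y₀ y₁ y y') : Continuous y :=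
  continuous_iff_continuousAt.2 fun t => (h.hasDerivAt t).continuousAt

lemma deriv_eq (h : IsIVPSolution a b y₀ y₁ y y') : deriv y = y' :=
  funext fun t => (h.hasDerivAt t).deriv

lemma deriv_deriv (h : IsIVPSolution a b y₀ y₁ y y') (t : ℝ) :
    deriv (deriv y) t = a * deriv y t + b * y t := by
  rw [h.deriv_eq]
  exact (h.hasDerivAt_deriv t).deriv

lemma exp_mul (h : IsIVPSolution a b y₀ y₁ y y') (r : ℝ) {a' b' y₁' : ℝ} (ha : a' = a + 2 * r)
    (hb : b' = b - a * r - r ^ 2) (hy : y₁' = y₁ + r * y₀) :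
    IsIVPSolution a' b' y₀ y₁' (fun t => exp (r * t) * y t)
      (fun t => exp (r * t) * (y' t + r * y t)) where
  hasDerivAt t := by
    have hexp := ((hasDerivAt_id t).const_mul r).exp
    exact (hexp.mul (h.hasDerivAt t)).congr_deriv (by simp only [id]; ring)
  hasDerivAt_deriv t := by
    have hexp := ((hasDerivAt_id t).const_mul r).exp
    refine (hexp.mul ((h.hasDerivAt_deriv t).fun_add ((h.hasDerivAt t).const_mul r))).congr_deriv
      ?_
    simp only [id]
    rw [ha, hb]
    ring
  initial_value := by simp [h.initial_value]
  initial_deriv := by simp [h.initial_value, h.initial_deriv, hy]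

/-- For `b ≤ 0` the energy `y'² - b y²` is conserved, so it vanishes with the initial data. -/
lemma eq_zero (hb : b ≤ 0) (h : IsIVPSolution 0 b 0 0 y y') : y = 0 := by
  have henergy_deriv (t : ℝ) : HasDerivAt (fun t => y' t ^ 2 - b * y t ^ 2) 0 t :=
    (((h.hasDerivAt_deriv t).pow 2).sub (((h.hasDerivAt t).pow 2).const_mul b)).congr_deriv
      (by ring)
  have henergy (t : ℝ) : y' t ^ 2 - b * y t ^ 2 = 0 := by
    have := is_const_of_deriv_eq_zero (fun t => (henergy_deriv t).differentiableAt)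
      (fun t => (henergy_deriv t).deriv) t 0
    simpa [h.initial_value, h.initial_deriv] using this
  have hy' (t : ℝ) : y' t = 0 := by
    nlinarith [henergy t, sq_nonneg (y' t), mul_nonneg (neg_nonneg.2 hb) (sq_nonneg (y t))]
  funext t
  rw [Pi.zero_apply, ← h.initial_value]
  exact is_const_of_deriv_eq_zero (fun t => (h.hasDerivAt t).differentiableAt)
    (fun t => by rw [(h.hasDerivAt t).deriv, hy']) t 0

theorem eq_cos_add_mul_cosConv {lam c : ℝ} {G G' : ℝ → ℝ}
    (h : IsIVPSolution lam (-c ^ 2) 1 lam G G') (t : ℝ) :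
    G t = cos (c * t) + lam * cosConv c G t := by
  have hD : IsIVPSolution 0 (-c ^ 2) 0 0 (fun t => cos (c * t) + lam * cosConv c G t - G t)
      (fun t => -c * sin (c * t) + lam * (G t - c * sinConv c G t) - G' t) := by
    have hcos (t : ℝ) := ((hasDerivAt_id t).const_mul c).cos
    have hsin (t : ℝ) := ((hasDerivAt_id t).const_mul c).sin
    refine ⟨fun t => ?_, fun t => ?_, by simp [cosConv, h.initial_value],
      by simp [sinConv, h.initial_value, h.initial_deriv]⟩
    · refine (((hcos t).add ((hasDerivAt_cosConv h.continuous t).const_mul lam)).sub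
        (h.hasDerivAt t)).congr_deriv ?_
      simp only [id]
      ring
    · refine ((((hsin t).const_mul (-c)).add (((h.hasDerivAt t).sub
        ((hasDerivAt_sinConv h.continuous t).const_mul c)).const_mul lam)).sub
        (h.hasDerivAt_deriv t)).congr_deriv ?_
      simp only [id]
      ring
  have := congrFun (hD.eq_zero (neg_nonpos.2 (sq_nonneg c))) t
  simp only [Pi.zero_apply] at this
  linarith

end IsIVPSolution

lemma iterInt_eq_iterInt_zero_sub (f : ℝ → ℝ) (n : ℕ) (a t : ℝ) :
    iterInt f n a t = iterInt f n 0 (t - a) := by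
  induction n generalizing a t with
  | zero => simp [iterInt]
  | succ n ih =>
    simp only [iterInt, sub_zero]
    simp_rw [ih _ t, ih _ (t - a)]
    have := intervalIntegral.integral_comp_sub_right (a := a) (b := t)
      (fun s => f s * iterInt f n 0 (t - a - s)) a
    simpa only [sub_self, sub_sub_sub_cancel_right] using this

lemma H_succ (c : ℝ) (n : ℕ) (t : ℝ) : H c (n + 1) t = cosConv c (H c n) t := by
  have := intervalIntegral.integral_comp_sub_left (a := 0) (b := t)
    (fun s => cos (c * (t - s)) * H c n s) t
  simp only [sub_sub_cancel, sub_self, sub_zero] at this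
  simp only [H, cosConv, iterInt, sub_zero] at this ⊢
  simp_rw [iterInt_eq_iterInt_zero_sub _ n _ t]
  exact this

lemma H_eq_iterate_cosConv (c : ℝ) (n : ℕ) : H c n = (cosConv c)^[n] (fun t => cos (c * t)) := by
  induction n with
  | zero => funext t; simp [H, iterInt]
  | succ n ih => funext t; rw [H_succ, ih, Function.iterate_succ_apply']

theorem exp_mul_tsum_H_eq {lam c : ℝ} {F F' : ℝ → ℝ} (hF : IsIVPSolution (-lam) (-c ^ 2) 1 0 F F')
    (t : ℝ) : exp (-lam * t) * ∑' n : ℕ, lam ^ n * H c n t = F t := by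
  have hG := hF.exp_mul lam (a' := lam) (b' := -c ^ 2) (y₁' := lam) (by ring) (by ring) (by ring)
  have hsum := hasSum_iterate_cosConv (by fun_prop) hG.continuous
    (fun t => hG.eq_cos_add_mul_cosConv t) t
  simp only [H_eq_iterate_cosConv, hsum.tsum_eq, ← mul_assoc, ← exp_add]
  simp

lemma IsIVPSolution.exp_neg_mul_half {lam c : ℝ} {w w' : ℝ → ℝ}
    (hw : IsIVPSolution 0 (lam ^ 2 / 4 - c ^ 2) 1 (lam / 2) w w') :
    IsIVPSolution (-lam) (-c ^ 2) 1 0 (fun t => exp (-(lam * t) / 2) * w t)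
      (fun t => exp (-(lam * t) / 2) * (w' t + -(lam / 2) * w t)) := by
  have h := hw.exp_mul (-(lam / 2)) (a' := -lam) (b' := -c ^ 2) (y₁' := 0)
    (by ring) (by ring) (by ring)
  simpa only [show ∀ t, -(lam / 2) * t = -(lam * t) / 2 from fun t => by ring] using h

lemma isIVPSolution_cosh_add_mul_sinh (k v : ℝ) :
    IsIVPSolution 0 (k ^ 2) 1 (v * k) (fun t => cosh (k * t) + v * sinh (k * t))
      (fun t => k * sinh (k * t) + v * k * cosh (k * t)) where
  hasDerivAt t := by
    have h := ((hasDerivAt_id t).const_mul k)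
    exact (h.cosh.add (h.sinh.const_mul v)).congr_deriv (by simp only [id]; ring)
  hasDerivAt_deriv t := by
    have h := ((hasDerivAt_id t).const_mul k)
    exact ((h.sinh.const_mul k).add (h.cosh.const_mul (v * k))).congr_deriv
      (by simp only [id]; ring)
  initial_value := by simp
  initial_deriv := by simp

lemma isIVPSolution_cos_add_mul_sin (k v : ℝ) :
    IsIVPSolution 0 (-k ^ 2) 1 (v * k) (fun t => cos (k * t) + v * sin (k * t))
      (fun t => -k * sin (k * t) + v * k * cos (k * t)) where
  hasDerivAt t := by
    have h := ((hasDerivAt_id t).const_mul k)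
    exact (h.cos.add (h.sin.const_mul v)).congr_deriv (by simp only [id]; ring)
  hasDerivAt_deriv t := by
    have h := ((hasDerivAt_id t).const_mul k)
    exact ((h.sin.const_mul (-k)).add (h.cos.const_mul (v * k))).congr_deriv
      (by simp only [id]; ring)
  initial_value := by simp
  initial_deriv := by simp

lemma isIVPSolution_one_add_mul (v : ℝ) :
    IsIVPSolution 0 0 1 v (fun t => 1 + v * t) (fun _ => v) where
  hasDerivAt t := by simpa using ((hasDerivAt_id t).const_mul v).const_add 1
  hasDerivAt_deriv t := by simpa using hasDerivAt_const t v
  initial_value := by simp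
  initial_deriv := rfl

lemma exists_isIVPSolution_overdamped {lam c : ℝ} (hc : 0 < 2 * c) (h : 2 * c < lam) :
    ∃ w', IsIVPSolution 0 (lam ^ 2 / 4 - c ^ 2) 1 (lam / 2)
      (fun t => cosh (t / 2 * √(lam ^ 2 - 4 * c ^ 2))
        + lam / √(lam ^ 2 - 4 * c ^ 2) * sinh (t / 2 * √(lam ^ 2 - 4 * c ^ 2))) w' := by
  have hpos : 0 < lam ^ 2 - 4 * c ^ 2 := by nlinarith
  set ω := √(lam ^ 2 - 4 * c ^ 2)
  have hω : ω ≠ 0 := (sqrt_pos.2 hpos).ne'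
  have hω2 : ω ^ 2 = lam ^ 2 - 4 * c ^ 2 := sq_sqrt hpos.le
  have hb : lam ^ 2 / 4 - c ^ 2 = (ω / 2) ^ 2 := by rw [div_pow, hω2]; ring
  have hy : lam / 2 = lam / ω * (ω / 2) := by field_simp
  have hw : (fun t => cosh (t / 2 * ω) + lam / ω * sinh (t / 2 * ω))
      = fun t => cosh (ω / 2 * t) + lam / ω * sinh (ω / 2 * t) := by
    funext t; ring_nf
  rw [hb, hy, hw]
  exact ⟨_, isIVPSolution_cosh_add_mul_sinh _ _⟩

lemma exists_isIVPSolution_underdamped {lam c : ℝ} (hlam : 0 < lam) (h : lam < 2 * c) :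
    ∃ w', IsIVPSolution 0 (lam ^ 2 / 4 - c ^ 2) 1 (lam / 2)
      (fun t => cos (t / 2 * √(4 * c ^ 2 - lam ^ 2))
        + lam / √(4 * c ^ 2 - lam ^ 2) * sin (t / 2 * √(4 * c ^ 2 - lam ^ 2))) w' := by
  have hpos : 0 < 4 * c ^ 2 - lam ^ 2 := by nlinarith
  set μ := √(4 * c ^ 2 - lam ^ 2)
  have hμ : μ ≠ 0 := (sqrt_pos.2 hpos).ne'
  have hμ2 : μ ^ 2 = 4 * c ^ 2 - lam ^ 2 := sq_sqrt hpos.le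
  have hb : lam ^ 2 / 4 - c ^ 2 = -(μ / 2) ^ 2 := by rw [div_pow, hμ2]; ring
  have hy : lam / 2 = lam / μ * (μ / 2) := by field_simp
  have hw : (fun t => cos (t / 2 * μ) + lam / μ * sin (t / 2 * μ))
      = fun t => cos (μ / 2 * t) + lam / μ * sin (μ / 2 * t) := by
    funext t; ring_nf
  rw [hb, hy, hw]
  exact ⟨_, isIVPSolution_cos_add_mul_sin _ _⟩

lemma exists_isIVPSolution_critical {lam c : ℝ} (h : lam = 2 * c) :
    ∃ w', IsIVPSolution 0 (lam ^ 2 / 4 - c ^ 2) 1 (lam / 2) (fun t => 1 + lam * t / 2) w' := by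
  have hb : lam ^ 2 / 4 - c ^ 2 = 0 := by rw [h]; ring
  have hw : (fun t => 1 + lam * t / 2) = fun t => 1 + lam / 2 * t := by
    funext t; ring
  rw [hb, hw]
  exact ⟨_, isIVPSolution_one_add_mul _⟩

/-- the mean value `E(t) = e^{-λt} ∑ λⁿ H_n(t)` of `cos d(P₀P_t)`
for the motion on the sphere satisfies `E'' = -λE' - c²E`, `E(0)=1`, `E'(0)=0`,
and hence has the explicit three-regime form. -/
theorem spherical_mean_ode_and_solution (lam c : ℝ) (hlam : 0 < lam) (hc : 0 < c)
    (E : ℝ → ℝ) (hE : ∀ t, E t = Real.exp (-lam * t) * ∑' n : ℕ, lam ^ n * H c n t) :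
    (∀ t, 0 < t → deriv (deriv E) t = -lam * deriv E t - c^2 * E t)
    ∧ E 0 = 1 ∧ deriv E 0 = 0
    ∧ (0 < 2 * c → 2 * c < lam → ∀ t, 0 ≤ t → E t
        = Real.exp (-(lam * t) / 2) *
            (Real.cosh (t / 2 * Real.sqrt (lam^2 - 4*c^2))
              + lam / Real.sqrt (lam^2 - 4*c^2) * Real.sinh (t / 2 * Real.sqrt (lam^2 - 4*c^2))))
    ∧ (lam = 2 * c → ∀ t, 0 ≤ t → E t
        = Real.exp (-(lam * t) / 2) * (1 + lam * t / 2))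
    ∧ (lam < 2 * c → ∀ t, 0 ≤ t → E t
        = Real.exp (-(lam * t) / 2) *
            (Real.cos (t / 2 * Real.sqrt (4*c^2 - lam^2))
              + lam / Real.sqrt (4*c^2 - lam^2) * Real.sin (t / 2 * Real.sqrt (4*c^2 - lam^2)))) := by
  have hE_eq {w w' : ℝ → ℝ} (hw : IsIVPSolution 0 (lam ^ 2 / 4 - c ^ 2) 1 (lam / 2) w w') (t : ℝ) :
      E t = exp (-(lam * t) / 2) * w t := by
    rw [hE, exp_mul_tsum_H_eq hw.exp_neg_mul_half]
  obtain ⟨w, w', hw⟩ : ∃ w w', IsIVPSolution 0 (lam ^ 2 / 4 - c ^ 2) 1 (lam / 2) w w' := by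
    rcases lt_trichotomy lam (2 * c) with h | h | h
    exacts [⟨_, exists_isIVPSolution_underdamped hlam h⟩, ⟨_, exists_isIVPSolution_critical h⟩,
      ⟨_, exists_isIVPSolution_overdamped (by linarith) h⟩]
  have hEsol := hw.exp_neg_mul_half
  rw [← funext (hE_eq hw)] at hEsol
  refine ⟨fun t _ => by rw [hEsol.deriv_deriv t]; ring, hEsol.initial_value,
    hEsol.deriv_eq ▸ hEsol.initial_deriv, fun h₀ h t _ => ?_, fun h t _ => ?_, fun h t _ => ?_⟩
  · obtain ⟨_, hw⟩ := exists_isIVPSolution_overdamped h₀ h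
    exact hE_eq hw t
  · obtain ⟨_, hw⟩ := exists_isIVPSolution_critical h
    exact hE_eq hw t
  · obtain ⟨_, hw⟩ := exists_isIVPSolution_underdamped hlam h
    exact hE_eq hw t
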